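/- Let (a, x) be coprime integers with 1 ≤ a < x, and let r be the remainder of x divided by a. Define J_{x/a}(q) := q·N_q(x/a) + (1−q)·D_q(x/a). Then J_{x/a}(q) = q²·(a, x−a)_q − (q−1)·(a, x)_q, and (a, x)_q = J_{x/a}(q) + q·(a−r, r)_q. -/

import Mathlib

open Polynomial

/-- The `q`-integer `[c]_q = 1 + q + ⋯ + q^{c-1}` as a polynomial in `ℤ[q]`. -/
noncomputable def qInt (c : ℕ) : Polynomial ℤ := ∑ i ∈ Finset.range c, X ^ i

/-- The polynomial `(a, b)_q ∈ ℤ[q]` associated to a pair of coprime positive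
integers: `(1, n)_q = (n, 1)_q = [n+1]_q`; if `a < b` then
`(a,b)_q = (a-r, r)_q + q·(a, b-a)_q` with `r = b % a`; if `a > b` then
`(a,b)_q = (a-b, b)_q + q^⌈a/b⌉·(r, b-r)_q` with `r = a % b`.
(Values on non-coprime or zero inputs are junk.) -/
noncomputable def W : ℕ → ℕ → Polynomial ℤ
  | 1, b => qInt (b + 1)
  | a, 1 => qInt (a + 1)
  | 0, _ => 0
  | _, 0 => 0
  | a + 2, b + 2 =>
    if a < b then
      W (a + 2 - (b + 2) % (a + 2)) ((b + 2) % (a + 2)) + X * W (a + 2) (b - a)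
    else
      W (a - b) (b + 2) +
        X ^ ((a + 2 + (b + 2) - 1) / (b + 2)) *
          W ((a + 2) % (b + 2)) (b + 2 - (a + 2) % (b + 2))
  termination_by a b => a + b
  decreasing_by
  · have := Nat.mod_lt (b + 2) (show 0 < a + 2 by omega); omega
  · omega
  · omega
  · have := Nat.mod_lt (a + 2) (show 0 < b + 2 by omega); omega

/-- The sequence of digits of the negative continued fraction expansion
`x/a = [c₁, …, c_l]⁻` (each `cᵢ = ⌈·⌉` of the current fraction). By convention
`ncfDigits x 0 = []` (for `1/0 = ∞`) and `ncfDigits x 1 = [x]`. -/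
def ncfDigits : ℕ → ℕ → List ℕ
  | _, 0 => []
  | x, 1 => [x]
  | x, a + 2 =>
      (x + (a + 2) - 1) / (a + 2) ::
        ncfDigits (a + 2) ((x + (a + 2) - 1) / (a + 2) * (a + 2) - x)
  termination_by x a => a
  decreasing_by
    have := Nat.div_mul_le_self (x + (a + 2) - 1) (a + 2); omega

/-- The (coprime) numerator and denominator of the Morier-Genoud–Ovsienko
`q`-deformation of the negative continued fraction `[c₁, …, c_l]⁻`, computed by
the continuant recursion `(N, D) ↦ ([c]_q·N - q^{c-1}·D, N)`, with `(1, 0)` for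
the empty list. -/
noncomputable def qCF : List ℕ → Polynomial ℤ × Polynomial ℤ
  | [] => (1, 0)
  | c :: rest =>
      let p := qCF rest
      (qInt c * p.1 - X ^ (c - 1) * p.2, p.1)

/-- Numerator `N_q(x/a)` of the Morier-Genoud–Ovsienko `q`-rational `[x/a]_q`. -/
noncomputable def Nq (x a : ℕ) : Polynomial ℤ := (qCF (ncfDigits x a)).1

/-- Denominator `D_q(x/a)` of the Morier-Genoud–Ovsienko `q`-rational `[x/a]_q`. -/
noncomputable def Dq (x a : ℕ) : Polynomial ℤ := (qCF (ncfDigits x a)).2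

/-- The normalized Jones polynomial `J_{x/a}(q) = q·N_q(x/a) + (1-q)·D_q(x/a)`. -/
noncomputable def Jq (x a : ℕ) : Polynomial ℤ := X * Nq x a + (1 - X) * Dq x a


/-!
Write `r = x % a`. The negative continued fraction of `x/a` is `⌈x/a⌉` followed by that of
`a/(a - r)`, so strong induction on `a` compares the continuant recursion for `(N_q, D_q)` with
the recursion of `(·,·)_q`; the invariant is `N_q(x/a) = (a, x - a)_q`, `D_q(x/a) = (a - r, r)_q`.
The induction step rests on two identities: `(a, ka + r)_q = [k]_q·(a - r, r)_q + q^k·(a, r)_q`,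
from iterating the recursion for `a < b`, and
`(s + r, r)_q = (1 + q)·(s, r)_q - q·(s - r % s, r % s)_q`, from the recursion for `a > b`.
Given the invariant, both formulas are linear consequences of
`(a, x)_q = (a - r, r)_q + q·(a, x - a)_q`.
-/

lemma qInt_zero : qInt 0 = 0 := by simp [qInt]

lemma qInt_one : qInt 1 = 1 := by simp [qInt]

lemma qInt_succ (n : ℕ) : qInt (n + 1) = qInt n + X ^ n := Finset.sum_range_succ _ _

lemma qInt_succ' (n : ℕ) : qInt (n + 1) = 1 + X * qInt n := by
  simp only [qInt, Finset.sum_range_succ', pow_succ', ← Finset.mul_sum, pow_zero, add_comm]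

lemma W_one_left (b : ℕ) : W 1 b = qInt (b + 1) := by
  match b with
  | 0 => rw [W]
  | 1 => rw [W]
  | n + 2 => rw [W]

lemma W_one_right (a : ℕ) : W a 1 = qInt (a + 1) := by
  match a with
  | 0 => rw [W]; omega
  | 1 => rw [W]
  | n + 2 => rw [W]; omega

lemma W_of_lt {a b : ℕ} (ha : 0 < a) (hab : a < b) :
    W a b = W (a - b % a) (b % a) + X * W a (b - a) := by
  obtain rfl | ha2 := (Nat.succ_le_of_lt ha).eq_or_lt
  · rw [Nat.mod_one, Nat.sub_zero, W_one_left, W_one_left, W_one_left,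
      Nat.sub_add_cancel hab.le, qInt_succ', qInt_one]
  · obtain ⟨a, rfl⟩ : ∃ c, a = c + 2 := ⟨a - 2, by omega⟩
    obtain ⟨b, rfl⟩ : ∃ d, b = d + 2 := ⟨b - 2, by omega⟩
    rw [W, if_pos (by omega), Nat.add_sub_add_right]

lemma W_of_gt {a b : ℕ} (hb : 0 < b) (hab : b < a) :
    W a b = W (a - b) b + X ^ ((a + b - 1) / b) * W (a % b) (b - a % b) := by
  obtain rfl | hb2 := (Nat.succ_le_of_lt hb).eq_or_lt
  · rw [Nat.mod_one, Nat.div_one, Nat.sub_zero, Nat.add_sub_cancel, W_one_right, W_one_right,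
      W_one_right, Nat.sub_add_cancel hab.le, qInt_succ, qInt_one, mul_one]
  · obtain ⟨a, rfl⟩ : ∃ c, a = c + 2 := ⟨a - 2, by omega⟩
    obtain ⟨b, rfl⟩ : ∃ d, b = d + 2 := ⟨b - 2, by omega⟩
    rw [W, if_neg (by omega), Nat.add_sub_add_right]

lemma W_mul_add {a r : ℕ} (hr : 0 < r) (hra : r < a) (k : ℕ) :
    W a (k * a + r) = qInt k * W (a - r) r + X ^ k * W a r := by
  induction k with
  | zero => simp [qInt_zero]
  | succ k ih =>
    have hmod : ((k + 1) * a + r) % a = r := by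
      rw [add_comm, Nat.add_mul_mod_self_right, Nat.mod_eq_of_lt hra]
    rw [W_of_lt (by omega) (by nlinarith), hmod, show (k + 1) * a + r - a = k * a + r by
      rw [add_mul, one_mul]; omega, ih, qInt_succ']
    ring

lemma W_add_self_left {s r : ℕ} (hs : 0 < s) (hr : 0 < r) (hco : s.Coprime r) :
    W (s + r) r = (1 + X) * W s r - X * W (s - r % s) (r % s) := by
  have hceil : (s + r + r - 1) / r = (s + r - 1) / r + 1 := by
    rw [show s + r + r - 1 = s + r - 1 + r by omega, Nat.add_div_right _ hr]
  rw [W_of_gt hr (by omega), Nat.add_sub_cancel, Nat.add_mod_right, hceil, pow_succ]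
  rcases lt_trichotomy r s with hrs | rfl | hsr
  · rw [W_of_gt hr hrs, Nat.mod_eq_of_lt hrs]
    ring
  · obtain rfl := (Nat.coprime_self r).mp hco
    simp [W_one_left, W_one_right, qInt_succ, qInt_zero]
    ring
  · have hceil1 : (s + r - 1) / r = 1 := Nat.div_eq_of_lt_le (by omega) (by omega)
    rw [W_of_lt hs hsr, Nat.mod_eq_of_lt hsr, hceil1]
    ring

lemma ncfDigits_of_mod_ne_zero {x a : ℕ} (ha : 2 ≤ a) (hx : x % a ≠ 0) :
    ncfDigits x a = (x / a + 1) :: ncfDigits a (a - x % a) := by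
  obtain ⟨a, rfl⟩ : ∃ c, a = c + 2 := ⟨a - 2, by omega⟩
  have hdiv := Nat.div_add_mod x (a + 2)
  have hmod := Nat.mod_lt x (show 0 < a + 2 by omega)
  have hmul : (x / (a + 2) + 1) * (a + 2) = (a + 2) * (x / (a + 2)) + (a + 2) := by ring
  have hceil : (x + (a + 2) - 1) / (a + 2) = x / (a + 2) + 1 :=
    Nat.div_eq_of_lt_le (by omega) (by rw [add_mul, hmul]; omega)
  rw [ncfDigits, hceil, hmul]
  congr 2
  omega

lemma Nq_one (x : ℕ) : Nq x 1 = qInt x := by simp [Nq, ncfDigits, qCF]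

lemma Dq_one (x : ℕ) : Dq x 1 = 1 := by simp [Dq, ncfDigits, qCF]

lemma Nq_of_mod_ne_zero {x a : ℕ} (ha : 2 ≤ a) (hx : x % a ≠ 0) :
    Nq x a = qInt (x / a + 1) * Nq a (a - x % a) - X ^ (x / a) * Dq a (a - x % a) := by
  simp [Nq, Dq, ncfDigits_of_mod_ne_zero ha hx, qCF]

lemma Dq_of_mod_ne_zero {x a : ℕ} (ha : 2 ≤ a) (hx : x % a ≠ 0) :
    Dq x a = Nq a (a - x % a) := by
  simp [Nq, Dq, ncfDigits_of_mod_ne_zero ha hx, qCF]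

theorem Nq_eq_W_and_Dq_eq_W (a : ℕ) {x : ℕ} (hco : a.Coprime x) (ha : 0 < a) (hax : a < x) :
    Nq x a = W a (x - a) ∧ Dq x a = W (a - x % a) (x % a) := by
  induction a using Nat.strong_induction_on generalizing x with
  | _ a ih =>
  obtain rfl | ha2 := (Nat.succ_le_of_lt ha).eq_or_lt
  · rw [Nq_one, Dq_one, W_one_left, Nat.sub_add_cancel hax.le, Nat.mod_one, W_one_left,
      qInt_one]
    exact ⟨rfl, rfl⟩
  have hr : x % a ≠ 0 := fun h => by
    have := Nat.Coprime.eq_one_of_dvd hco (Nat.dvd_of_mod_eq_zero h)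
    omega
  have hra := Nat.mod_lt x ha
  have hco_ra : (x % a).Coprime a := (Nat.gcd_rec a x).symm.trans hco
  have hdiv := Nat.div_add_mod x a
  have hquot : 0 < x / a := Nat.div_pos hax.le ha
  rw [Nq_of_mod_ne_zero ha2 hr, Dq_of_mod_ne_zero ha2 hr]
  generalize x % a = r at *
  generalize x / a = m at *
  obtain ⟨s, rfl⟩ : ∃ s, a = s + r := ⟨a - r, by omega⟩
  obtain ⟨n, rfl⟩ : ∃ n, m = n + 1 := ⟨m - 1, by omega⟩
  have hx : x - (s + r) = n * (s + r) + r := by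
    rw [← hdiv, mul_add_one, mul_comm]
    omega
  have hs : 0 < s := by omega
  have hco_sr : s.Coprime r := (Nat.coprime_add_self_right.mp hco_ra).symm
  obtain ⟨ihN, ihD⟩ := ih s (by omega) (Nat.coprime_self_add_right.mpr hco_sr) hs (by omega)
  rw [Nat.add_sub_cancel_left] at ihN
  rw [Nat.add_mod_left] at ihD
  rw [Nat.add_sub_cancel, ihN, ihD, hx, W_mul_add (Nat.pos_of_ne_zero hr) hra,
    Nat.add_sub_cancel, W_add_self_left hs (Nat.pos_of_ne_zero hr) hco_sr, qInt_succ, qInt_succ]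
  exact ⟨by ring, rfl⟩

/-- For coprime `1 ≤ a < x` with `r = x % a`, and
`J_{x/a}(q) = q·N_q(x/a) + (1-q)·D_q(x/a)`:
`J_{x/a}(q) = q²·(a, x−a)_q − (q−1)·(a, x)_q` and
`(a, x)_q = J_{x/a}(q) + q·(a−r, r)_q`. -/
theorem Jq_eq_W (a x : ℕ) (hco : Nat.Coprime a x) (ha : 1 ≤ a) (hax : a < x) :
    Jq x a = X ^ 2 * W a (x - a) - (X - 1) * W a x ∧
    W a x = Jq x a + X * W (a - x % a) (x % a) := by
  obtain ⟨hN, hD⟩ := Nq_eq_W_and_Dq_eq_W a hco ha hax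
  have hW := W_of_lt ha hax
  rw [Jq, hN, hD]
  exact ⟨by linear_combination (X - 1) * hW, by linear_combination hW⟩
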